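/- On the Heisenberg group ℍ^n with Q = 2n+2 and gauge N(x,y,t) = ((|x|²+|y|²)²+t²)^{1/4}, the function Γ = N^{2-Q} is harmonic for the sub-Laplacian on ℍ^n \ {0}: Δ_H (N^{2-Q}) = Σ_i (X_i² + Y_i²) N^{2-Q} = 0 for (x,y,t) ≠ 0. -/
import Mathlib

open Real

/-- The Korányi gauge on the Heisenberg group `ℍⁿ = ℝⁿ × ℝⁿ × ℝ`. -/
noncomputable def gaugeH {n : ℕ}
    (ξ : EuclideanSpace ℝ (Fin n) × EuclideanSpace ℝ (Fin n) × ℝ) : ℝ :=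
  ((‖ξ.1‖ ^ 2 + ‖ξ.2.1‖ ^ 2) ^ 2 + ξ.2.2 ^ 2) ^ ((1 : ℝ) / 4)

/-- The horizontal vector field `X_i = ∂_{x_i} + 2 y_i ∂_t`. -/
noncomputable def Xop {n : ℕ} (i : Fin n)
    (f : EuclideanSpace ℝ (Fin n) × EuclideanSpace ℝ (Fin n) × ℝ → ℝ)
    (ξ : EuclideanSpace ℝ (Fin n) × EuclideanSpace ℝ (Fin n) × ℝ) : ℝ :=
  fderiv ℝ f ξ (EuclideanSpace.single i 1, 0, 0) + 2 * ξ.2.1 i * fderiv ℝ f ξ (0, 0, 1)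

/-- The horizontal vector field `Y_i = ∂_{y_i} - 2 x_i ∂_t`. -/
noncomputable def Yop {n : ℕ} (i : Fin n)
    (f : EuclideanSpace ℝ (Fin n) × EuclideanSpace ℝ (Fin n) × ℝ → ℝ)
    (ξ : EuclideanSpace ℝ (Fin n) × EuclideanSpace ℝ (Fin n) × ℝ) : ℝ :=
  fderiv ℝ f ξ (0, EuclideanSpace.single i 1, 0) - 2 * ξ.1 i * fderiv ℝ f ξ (0, 0, 1)

/-- The fourth power of the gauge. -/
noncomputable def rhoH {n : ℕ}
    (ξ : EuclideanSpace ℝ (Fin n) × EuclideanSpace ℝ (Fin n) × ℝ) : ℝ :=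
  (‖ξ.1‖ ^ 2 + ‖ξ.2.1‖ ^ 2) ^ 2 + ξ.2.2 ^ 2

section Aux
variable {n : ℕ}
local notation "E" => EuclideanSpace ℝ (Fin n)
local notation "H" => EuclideanSpace ℝ (Fin n) × EuclideanSpace ℝ (Fin n) × ℝ

noncomputable def P1 : H →L[ℝ] E := ContinuousLinearMap.fst ℝ E (E × ℝ)
noncomputable def P2 : H →L[ℝ] E :=
  (ContinuousLinearMap.fst ℝ E ℝ).comp (ContinuousLinearMap.snd ℝ E (E × ℝ))
noncomputable def P3 : H →L[ℝ] ℝ :=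
  (ContinuousLinearMap.snd ℝ E ℝ).comp (ContinuousLinearMap.snd ℝ E (E × ℝ))
noncomputable def Q1 (i : Fin n) : H →L[ℝ] ℝ := (EuclideanSpace.proj i).comp P1
noncomputable def Q2 (i : Fin n) : H →L[ℝ] ℝ := (EuclideanSpace.proj i).comp P2

noncomputable def UD (ξ : H) : H →L[ℝ] ℝ :=
  (2 • (innerSL ℝ ξ.1).comp P1) + (2 • (innerSL ℝ ξ.2.1).comp P2)

noncomputable def RD (ξ : H) : H →L[ℝ] ℝ :=
  ((2 : ℕ) * (‖ξ.1‖ ^ 2 + ‖ξ.2.1‖ ^ 2) ^ 1) • UD ξ + ((2 : ℕ) * ξ.2.2 ^ 1) • P3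

lemma hasFDerivAt_u (ξ : H) :
    HasFDerivAt (fun ζ : H => ‖ζ.1‖ ^ 2 + ‖ζ.2.1‖ ^ 2) (UD ξ) ξ :=
  (hasFDerivAt_fst.norm_sq).add ((hasFDerivAt_fst.comp ξ hasFDerivAt_snd).norm_sq)

lemma hasFDerivAt_t (ξ : H) :
    HasFDerivAt (fun ζ : H => ζ.2.2) (P3 (n := n)) ξ :=
  hasFDerivAt_snd.comp ξ hasFDerivAt_snd

lemma hasFDerivAt_x (i : Fin n) (ξ : H) :
    HasFDerivAt (fun ζ : H => ζ.1 i) (Q1 i) ξ :=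
  (Q1 i).hasFDerivAt

lemma hasFDerivAt_y (i : Fin n) (ξ : H) :
    HasFDerivAt (fun ζ : H => ζ.2.1 i) (Q2 i) ξ :=
  (Q2 i).hasFDerivAt

lemma hasFDerivAt_rho (ξ : H) : HasFDerivAt (rhoH (n := n)) (RD ξ) ξ :=
  ((hasDerivAt_pow 2 _).comp_hasFDerivAt ξ (hasFDerivAt_u ξ)).add
    ((hasDerivAt_pow 2 _).comp_hasFDerivAt ξ (hasFDerivAt_t ξ))

lemma rho_pos (ξ : H) (hξ : ξ ≠ 0) : 0 < rhoH ξ := by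
  have h0 : 0 ≤ rhoH ξ := by unfold rhoH; positivity
  rcases h0.lt_or_eq with h | h
  · exact h
  exfalso
  unfold rhoH at h
  have hs : (‖ξ.1‖ ^ 2 + ‖ξ.2.1‖ ^ 2) ^ 2 = 0 := by
    nlinarith [sq_nonneg (‖ξ.1‖ ^ 2 + ‖ξ.2.1‖ ^ 2), sq_nonneg ξ.2.2]
  have ht : ξ.2.2 = 0 := by
    have : ξ.2.2 ^ 2 = 0 := by linarith [sq_nonneg (‖ξ.1‖ ^ 2 + ‖ξ.2.1‖ ^ 2), sq_nonneg ξ.2.2]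
    exact pow_eq_zero_iff (n := 2) (by norm_num) |>.mp this
  have hu : ‖ξ.1‖ ^ 2 + ‖ξ.2.1‖ ^ 2 = 0 :=
    pow_eq_zero_iff (n := 2) (by norm_num) |>.mp hs
  have hx : ‖ξ.1‖ = 0 := by
    have : ‖ξ.1‖ ^ 2 = 0 := by nlinarith [sq_nonneg ‖ξ.1‖, sq_nonneg ‖ξ.2.1‖]
    exact pow_eq_zero_iff (n := 2) (by norm_num) |>.mp this
  have hy : ‖ξ.2.1‖ = 0 := by
    have : ‖ξ.2.1‖ ^ 2 = 0 := by nlinarith [sq_nonneg ‖ξ.1‖, sq_nonneg ‖ξ.2.1‖]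
    exact pow_eq_zero_iff (n := 2) (by norm_num) |>.mp this
  exact hξ (Prod.ext (norm_eq_zero.mp hx) (Prod.ext (norm_eq_zero.mp hy) ht))

lemma hasFDerivAt_rpow (p : ℝ) (ξ : H) (hξ : ξ ≠ 0) :
    HasFDerivAt (fun ζ : H => rhoH ζ ^ p) ((p * rhoH ξ ^ (p - 1)) • RD ξ) ξ :=
  (Real.hasDerivAt_rpow_const (Or.inl (rho_pos ξ hξ).ne')).comp_hasFDerivAt ξ
    (hasFDerivAt_rho ξ)

lemma Xop_rpow (p : ℝ) (i : Fin n) (ξ : H) (hξ : ξ ≠ 0) :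
    Xop i (fun ζ : H => rhoH ζ ^ p) ξ =
      4 * p * (rhoH ξ ^ (p - 1) *
        ((‖ξ.1‖ ^ 2 + ‖ξ.2.1‖ ^ 2) * ξ.1 i + ξ.2.1 i * ξ.2.2)) := by
  rw [Xop, (hasFDerivAt_rpow p ξ hξ).fderiv]
  simp [RD, UD, P1, P2, P3, EuclideanSpace.inner_single_right]
  ring

lemma Yop_rpow (p : ℝ) (i : Fin n) (ξ : H) (hξ : ξ ≠ 0) :
    Yop i (fun ζ : H => rhoH ζ ^ p) ξ =
      4 * p * (rhoH ξ ^ (p - 1) *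
        ((‖ξ.1‖ ^ 2 + ‖ξ.2.1‖ ^ 2) * ξ.2.1 i - ξ.1 i * ξ.2.2)) := by
  rw [Yop, (hasFDerivAt_rpow p ξ hξ).fderiv]
  simp [RD, UD, P1, P2, P3, EuclideanSpace.inner_single_right]
  ring

lemma per_i (p : ℝ) (i : Fin n) (ξ : H) (hξ : ξ ≠ 0) :
    Xop i (Xop i (fun ζ : H => rhoH ζ ^ p)) ξ +
      Yop i (Yop i (fun ζ : H => rhoH ζ ^ p)) ξ =
    (16 * p * (p - 1) * (rhoH ξ ^ (p - 1 - 1) * rhoH ξ) + 16 * p * rhoH ξ ^ (p - 1)) *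
        ((ξ.1 i) ^ 2 + (ξ.2.1 i) ^ 2) +
      8 * p * rhoH ξ ^ (p - 1) * (‖ξ.1‖ ^ 2 + ‖ξ.2.1‖ ^ 2) := by
  have hmem : {ζ : H | ζ ≠ 0} ∈ nhds ξ := isOpen_ne.mem_nhds hξ
  -- first derivative along X as a function
  have hgX : HasFDerivAt
      (fun ζ : H => 4 * p * (rhoH ζ ^ (p - 1) *
        ((‖ζ.1‖ ^ 2 + ‖ζ.2.1‖ ^ 2) * ζ.1 i + ζ.2.1 i * ζ.2.2)))
      ((4 * p) • ((rhoH ξ ^ (p - 1)) •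
          (((‖ξ.1‖ ^ 2 + ‖ξ.2.1‖ ^ 2) • Q1 i + (ξ.1 i) • UD ξ) +
            ((ξ.2.1 i) • P3 + ξ.2.2 • Q2 i)) +
        ((‖ξ.1‖ ^ 2 + ‖ξ.2.1‖ ^ 2) * ξ.1 i + ξ.2.1 i * ξ.2.2) •
          (((p - 1) * rhoH ξ ^ (p - 1 - 1)) • RD ξ))) ξ := by
    exact (((hasFDerivAt_rpow (p - 1) ξ hξ).mul
      (((hasFDerivAt_u ξ).mul (hasFDerivAt_x i ξ)).add
        ((hasFDerivAt_y i ξ).mul (hasFDerivAt_t ξ)))).const_mul (4 * p))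
  have hgY : HasFDerivAt
      (fun ζ : H => 4 * p * (rhoH ζ ^ (p - 1) *
        ((‖ζ.1‖ ^ 2 + ‖ζ.2.1‖ ^ 2) * ζ.2.1 i - ζ.1 i * ζ.2.2)))
      ((4 * p) • ((rhoH ξ ^ (p - 1)) •
          (((‖ξ.1‖ ^ 2 + ‖ξ.2.1‖ ^ 2) • Q2 i + (ξ.2.1 i) • UD ξ) -
            ((ξ.1 i) • P3 + ξ.2.2 • Q1 i)) +
        ((‖ξ.1‖ ^ 2 + ‖ξ.2.1‖ ^ 2) * ξ.2.1 i - ξ.1 i * ξ.2.2) •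
          (((p - 1) * rhoH ξ ^ (p - 1 - 1)) • RD ξ))) ξ := by
    exact (((hasFDerivAt_rpow (p - 1) ξ hξ).mul
      (((hasFDerivAt_u ξ).mul (hasFDerivAt_y i ξ)).sub
        ((hasFDerivAt_x i ξ).mul (hasFDerivAt_t ξ)))).const_mul (4 * p))
  have hevX : Xop i (fun ζ : H => rhoH ζ ^ p) =ᶠ[nhds ξ]
      (fun ζ : H => 4 * p * (rhoH ζ ^ (p - 1) *
        ((‖ζ.1‖ ^ 2 + ‖ζ.2.1‖ ^ 2) * ζ.1 i + ζ.2.1 i * ζ.2.2))) := by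
    filter_upwards [hmem] with ζ hζ
    exact Xop_rpow p i ζ hζ
  have hevY : Yop i (fun ζ : H => rhoH ζ ^ p) =ᶠ[nhds ξ]
      (fun ζ : H => 4 * p * (rhoH ζ ^ (p - 1) *
        ((‖ζ.1‖ ^ 2 + ‖ζ.2.1‖ ^ 2) * ζ.2.1 i - ζ.1 i * ζ.2.2))) := by
    filter_upwards [hmem] with ζ hζ
    exact Yop_rpow p i ζ hζ
  have e1 : Xop i (Xop i (fun ζ : H => rhoH ζ ^ p)) ξ =
      fderiv ℝ (Xop i (fun ζ : H => rhoH ζ ^ p)) ξ (EuclideanSpace.single i 1, 0, 0) +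
        2 * ξ.2.1 i * fderiv ℝ (Xop i (fun ζ : H => rhoH ζ ^ p)) ξ (0, 0, 1) := rfl
  have e2 : Yop i (Yop i (fun ζ : H => rhoH ζ ^ p)) ξ =
      fderiv ℝ (Yop i (fun ζ : H => rhoH ζ ^ p)) ξ (0, EuclideanSpace.single i 1, 0) -
        2 * ξ.1 i * fderiv ℝ (Yop i (fun ζ : H => rhoH ζ ^ p)) ξ (0, 0, 1) := rfl
  rw [e1, e2, hevX.fderiv_eq, hevY.fderiv_eq, hgX.fderiv, hgY.fderiv]
  simp [RD, UD, P1, P2, P3, Q1, Q2, EuclideanSpace.inner_single_right]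
  unfold rhoH
  ring

end Aux

theorem stmt17 (n : ℕ) (hn : 0 < n)
    (ξ : EuclideanSpace ℝ (Fin n) × EuclideanSpace ℝ (Fin n) × ℝ) (hξ : ξ ≠ 0) :
    ∑ i : Fin n,
        (Xop i (Xop i (fun ζ => gaugeH ζ ^ ((2 : ℝ) - (2 * n + 2)))) ξ +
          Yop i (Yop i (fun ζ => gaugeH ζ ^ ((2 : ℝ) - (2 * n + 2)))) ξ) = 0 := by
  set p : ℝ := (1 : ℝ) / 4 * ((2 : ℝ) - (2 * n + 2)) with hp
  have hfun : (fun ζ : EuclideanSpace ℝ (Fin n) × EuclideanSpace ℝ (Fin n) × ℝ =>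
      gaugeH ζ ^ ((2 : ℝ) - (2 * n + 2))) = fun ζ => rhoH ζ ^ p := by
    funext ζ
    have h0 : (0 : ℝ) ≤ rhoH ζ := by unfold rhoH; positivity
    calc gaugeH ζ ^ ((2 : ℝ) - (2 * n + 2))
        = (rhoH ζ ^ ((1 : ℝ) / 4)) ^ ((2 : ℝ) - (2 * n + 2)) := rfl
      _ = rhoH ζ ^ p := (Real.rpow_mul h0 _ _).symm
  rw [hfun]
  have hsum : ∑ i : Fin n,
      (Xop i (Xop i (fun ζ => rhoH ζ ^ p)) ξ + Yop i (Yop i (fun ζ => rhoH ζ ^ p)) ξ) =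
      (16 * p * (p - 1) * (rhoH ξ ^ (p - 1 - 1) * rhoH ξ) + 16 * p * rhoH ξ ^ (p - 1)) *
          (∑ i : Fin n, ((ξ.1 i) ^ 2 + (ξ.2.1 i) ^ 2)) +
        (n : ℝ) * (8 * p * rhoH ξ ^ (p - 1) * (‖ξ.1‖ ^ 2 + ‖ξ.2.1‖ ^ 2)) := by
    rw [Finset.sum_congr rfl fun i _ => per_i p i ξ hξ, Finset.sum_add_distrib,
      Finset.sum_const, ← Finset.mul_sum]
    simp [Finset.card_univ, nsmul_eq_mul]
  rw [hsum]
  have hxsum : ∑ i : Fin n, (ξ.1 i) ^ 2 = ‖ξ.1‖ ^ 2 := by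
    rw [EuclideanSpace.norm_eq, Real.sq_sqrt (by positivity)]
    simp [Real.norm_eq_abs, sq_abs]
  have hysum : ∑ i : Fin n, (ξ.2.1 i) ^ 2 = ‖ξ.2.1‖ ^ 2 := by
    rw [EuclideanSpace.norm_eq, Real.sq_sqrt (by positivity)]
    simp [Real.norm_eq_abs, sq_abs]
  rw [Finset.sum_add_distrib, hxsum, hysum]
  have hρ1 : rhoH ξ ^ (p - 1 - 1) * rhoH ξ = rhoH ξ ^ (p - 1) := by
    rw [← Real.rpow_add_one (rho_pos ξ hξ).ne' (p - 1 - 1)]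
    congr 1
    ring
  rw [hρ1]
  have hpn : 16 * p + 8 * (n : ℝ) = 0 := by rw [hp]; push_cast; ring
  linear_combination (rhoH ξ ^ (p - 1) * (‖ξ.1‖ ^ 2 + ‖ξ.2.1‖ ^ 2) * p) * hpn
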